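/- Let m, p be positive integers, ρ_in : SO(3) → GL(m,ℝ) a group homomorphism, and ρ_out : SO(3) → O(p) a group homomorphism into the real p×p orthogonal matrices. Let W_Q ∈ ℝ^{p×m} satisfy W_Q·ρ_in(r) = ρ_out(r)·W_Q for all r ∈ SO(3), and let W_K : ℝ³ → ℝ^{p×m} satisfy W_K(R_r·y)·ρ_in(r) = ρ_out(r)·W_K(y) for all r ∈ SO(3), y ∈ ℝ³. For a point cloud X : Fin N → ℝ³, features F : Fin N → ℝ^m, 1 ≤ k ≤ N, and indices i, j with j ∈ N_i^k(X), define the attention kernel α_X(F)(i,j) = exp(⟨W_Q·F i, W_K(X j − X i)·F j⟩) / Σ_{j' ∈ N_i^k(X)} exp(⟨W_Q·F i, W_K(X j' − X i)·F j'⟩). Then for every rotation r ∈ SO(3) with matrix R and translation T ∈ ℝ³, the attention kernel is invariant: α_{L_{(R,T)}[X]}(ρ_in(r)∘F)(i,j) = α_X(F)(i,j) for all i and all j ∈ N_i^k(X). -/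

import Mathlib

open Matrix

noncomputable section

/-- `SO(3)`: real 3×3 orthogonal matrices of determinant 1. -/
abbrev SO3 := Matrix.specialOrthogonalGroup (Fin 3) ℝ

noncomputable instance : Group SO3 :=
  { (inferInstance : Monoid SO3) with
    inv := fun A => ⟨star A.1, ⟨Unitary.star_mem A.2.1, by
      have h : (star A.1).det = star (A.1.det) := by
        rw [Matrix.star_eq_conjTranspose, Matrix.det_conjTranspose]
      have h2 : A.1.det = 1 := A.2.2
      simpa [MonoidHom.mem_mker, h2] using h⟩⟩
    inv_mul_cancel := fun A => Subtype.ext A.2.1.1 }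

/-- Euclidean 3-space. -/
abbrev V3 := EuclideanSpace ℝ (Fin 3)

/-- Matrix-vector multiplication on Euclidean 3-space. -/
def mv (M : Matrix (Fin 3) (Fin 3) ℝ) (v : V3) : V3 :=
  (WithLp.equiv 2 (Fin 3 → ℝ)).symm (M *ᵥ (WithLp.equiv 2 (Fin 3 → ℝ) v))

/-- Roto-translation action `L_{(R,T)}` on point clouds: `(L_{(R,T)}[X]) i = R·(X i) + T`. -/
def rt {N : ℕ} (R : SO3) (T : V3) (X : Fin N → V3) : Fin N → V3 :=
  fun i => mv (R : Matrix (Fin 3) (Fin 3) ℝ) (X i) + T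

open scoped Classical in
/-- `d_k(X,i)`: the k-th smallest distance from `X i` to points of `X`. -/
def dk {N : ℕ} (X : Fin N → V3) (i : Fin N) (k : ℕ) : ℝ :=
  sInf { d : ℝ | k ≤ (Finset.univ.filter (fun j => ‖X i - X j‖ ≤ d)).card }

open scoped Classical in
/-- `N_i^k(X)`: the k-nearest-neighbor neighborhood of point `i` (including ties). -/
def nbhd {N : ℕ} (X : Fin N → V3) (i : Fin N) (k : ℕ) : Finset (Fin N) :=
  Finset.univ.filter (fun j => ‖X i - X j‖ ≤ dk X i k)

/-- The attention kernel
`α_X(F)(i,j) = exp⟨W_Q·F i, W_K(X j − X i)·F j⟩ / Σ_{j' ∈ N_i^k(X)} exp⟨W_Q·F i, W_K(X j' − X i)·F j'⟩`. -/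
def attnKernel {N : ℕ} (m p k : ℕ) (WQ : Matrix (Fin p) (Fin m) ℝ)
    (WK : V3 → Matrix (Fin p) (Fin m) ℝ)
    (X : Fin N → V3) (F : Fin N → (Fin m → ℝ)) (i j : Fin N) : ℝ :=
  Real.exp ((WQ *ᵥ F i) ⬝ᵥ (WK (X j - X i) *ᵥ F j)) /
    ∑ j' ∈ nbhd X i k, Real.exp ((WQ *ᵥ F i) ⬝ᵥ (WK (X j' - X i) *ᵥ F j'))

/-!
Rotations and translations preserve the distances `‖X i - X j‖`, so the neighbourhoods
`N_i^k` do not move. Each attention score is a dot product `⟨W_Q F i, W_K(X j - X i) F j⟩`;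
the intertwining relations pull `ρ_in(r)` through both factors as the orthogonal matrix
`ρ_out(r)`, which then cancels in the dot product. So numerator and denominator are unchanged.
-/

lemma dotProduct_mulVec_mulVec_of_mem_orthogonalGroup {n R : Type*} [Fintype n] [DecidableEq n]
    [CommRing R] {A : Matrix n n R} (hA : A ∈ orthogonalGroup n R) (x y : n → R) :
    (A *ᵥ x) ⬝ᵥ (A *ᵥ y) = x ⬝ᵥ y := by
  rw [dotProduct_mulVec, ← mulVec_transpose, mulVec_mulVec, (mem_orthogonalGroup_iff' _ _).1 hA,
    one_mulVec]

lemma dotProduct_mulVec_mulVec_of_intertwining {m n p R : Type*} [Fintype m] [Fintype n]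
    [Fintype p] [DecidableEq p] [CommRing R] {A : Matrix p p R} (hA : A ∈ orthogonalGroup p R)
    {B : Matrix m m R} {Q : Matrix p m R} {K K' : Matrix p n R} (hQ : Q * B = A * Q)
    {C : Matrix n n R} (hK : K' * C = A * K) (x : m → R) (y : n → R) :
    (Q *ᵥ (B *ᵥ x)) ⬝ᵥ (K' *ᵥ (C *ᵥ y)) = (Q *ᵥ x) ⬝ᵥ (K *ᵥ y) := by
  rw [mulVec_mulVec, mulVec_mulVec, hQ, hK, ← mulVec_mulVec, ← mulVec_mulVec,
    dotProduct_mulVec_mulVec_of_mem_orthogonalGroup hA]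

lemma norm_mv_of_mem_orthogonalGroup {A : Matrix (Fin 3) (Fin 3) ℝ}
    (hA : A ∈ orthogonalGroup (Fin 3) ℝ) (v : V3) : ‖mv A v‖ = ‖v‖ := by
  have h := dotProduct_mulVec_mulVec_of_mem_orthogonalGroup hA (WithLp.equiv 2 _ v)
    (WithLp.equiv 2 _ v)
  rw [EuclideanSpace.norm_eq, EuclideanSpace.norm_eq]
  congr 1
  simpa [dotProduct, mv, sq] using h

lemma mv_sub (A : Matrix (Fin 3) (Fin 3) ℝ) (v w : V3) : mv A (v - w) = mv A v - mv A w := by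
  simp [mv, mulVec_sub]

lemma rt_sub_rt {N : ℕ} (R : SO3) (T : V3) (X : Fin N → V3) (a b : Fin N) :
    rt R T X a - rt R T X b = mv (R : Matrix (Fin 3) (Fin 3) ℝ) (X a - X b) := by
  simp [rt, mv_sub]

lemma norm_rt_sub_rt {N : ℕ} (R : SO3) (T : V3) (X : Fin N → V3) (a b : Fin N) :
    ‖rt R T X a - rt R T X b‖ = ‖X a - X b‖ := by
  rw [rt_sub_rt, norm_mv_of_mem_orthogonalGroup (mem_specialOrthogonalGroup_iff.1 R.2).1]

lemma dk_congr {N : ℕ} {X Y : Fin N → V3} {i : Fin N} (h : ∀ j, ‖Y i - Y j‖ = ‖X i - X j‖)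
    (k : ℕ) : dk Y i k = dk X i k := by
  simp only [dk, h]

lemma nbhd_congr {N : ℕ} {X Y : Fin N → V3} {i : Fin N} (h : ∀ j, ‖Y i - Y j‖ = ‖X i - X j‖)
    (k : ℕ) : nbhd Y i k = nbhd X i k := by
  simp only [nbhd, h, dk_congr h]

lemma nbhd_rt {N : ℕ} (R : SO3) (T : V3) (X : Fin N → V3) (i : Fin N) (k : ℕ) :
    nbhd (rt R T X) i k = nbhd X i k :=
  nbhd_congr (norm_rt_sub_rt R T X i) k

theorem attnKernel_invariant_general (N m p : ℕ)
    (ρin : SO3 →* GL (Fin m) ℝ)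
    (ρout : SO3 →* Matrix.orthogonalGroup (Fin p) ℝ)
    (WQ : Matrix (Fin p) (Fin m) ℝ)
    (hWQ : ∀ r : SO3, WQ * ((ρin r : GL (Fin m) ℝ) : Matrix (Fin m) (Fin m) ℝ) =
      (ρout r : Matrix (Fin p) (Fin p) ℝ) * WQ)
    (WK : V3 → Matrix (Fin p) (Fin m) ℝ)
    (hWK : ∀ (r : SO3) (y : V3),
      WK (mv (r : Matrix (Fin 3) (Fin 3) ℝ) y) *
          ((ρin r : GL (Fin m) ℝ) : Matrix (Fin m) (Fin m) ℝ) =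
        (ρout r : Matrix (Fin p) (Fin p) ℝ) * WK y)
    (X : Fin N → V3) (F : Fin N → (Fin m → ℝ)) (k : ℕ)
    (r : SO3) (T : V3) :
    ∀ i : Fin N, ∀ j ∈ nbhd X i k,
      attnKernel m p k WQ WK (rt r T X)
          (fun i' => ((ρin r : GL (Fin m) ℝ) : Matrix (Fin m) (Fin m) ℝ) *ᵥ F i') i j =
        attnKernel m p k WQ WK X F i j := by
  intro i j _
  have hscore : ∀ a b : Fin N,
      (WQ *ᵥ (((ρin r : GL (Fin m) ℝ) : Matrix (Fin m) (Fin m) ℝ) *ᵥ F a)) ⬝ᵥ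
          (WK (rt r T X b - rt r T X a) *ᵥ
            (((ρin r : GL (Fin m) ℝ) : Matrix (Fin m) (Fin m) ℝ) *ᵥ F b)) =
        (WQ *ᵥ F a) ⬝ᵥ (WK (X b - X a) *ᵥ F b) := fun a b => by
    rw [rt_sub_rt]
    exact dotProduct_mulVec_mulVec_of_intertwining (ρout r).2 (hWQ r) (hWK r _) _ _
  simp only [attnKernel, nbhd_rt, hscore]

/-- with intertwining `W_Q` and `W_K`, the attention kernel is invariant
under simultaneous roto-translation of the point cloud and transformation of the
features: `α_{L_{(R,T)}[X]}(ρ_in(r)∘F)(i,j) = α_X(F)(i,j)`. -/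
theorem attnKernel_invariant (N m p : ℕ) (hm : 0 < m) (hp : 0 < p)
    (ρin : SO3 →* GL (Fin m) ℝ)
    (ρout : SO3 →* Matrix.orthogonalGroup (Fin p) ℝ)
    (WQ : Matrix (Fin p) (Fin m) ℝ)
    (hWQ : ∀ r : SO3, WQ * ((ρin r : GL (Fin m) ℝ) : Matrix (Fin m) (Fin m) ℝ) =
      (ρout r : Matrix (Fin p) (Fin p) ℝ) * WQ)
    (WK : V3 → Matrix (Fin p) (Fin m) ℝ)
    (hWK : ∀ (r : SO3) (y : V3),
      WK (mv (r : Matrix (Fin 3) (Fin 3) ℝ) y) *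
          ((ρin r : GL (Fin m) ℝ) : Matrix (Fin m) (Fin m) ℝ) =
        (ρout r : Matrix (Fin p) (Fin p) ℝ) * WK y)
    (X : Fin N → V3) (F : Fin N → (Fin m → ℝ)) (k : ℕ) (hk1 : 1 ≤ k) (hkN : k ≤ N)
    (r : SO3) (T : V3) :
    ∀ i : Fin N, ∀ j ∈ nbhd X i k,
      attnKernel m p k WQ WK (rt r T X)
          (fun i' => ((ρin r : GL (Fin m) ℝ) : Matrix (Fin m) (Fin m) ℝ) *ᵥ F i') i j =
        attnKernel m p k WQ WK X F i j :=
  attnKernel_invariant_general N m p ρin ρout WQ hWQ WK hWK X F k r T
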